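/- arXiv:1507.03855 — 4 statements merged into one kernel-verified Lean document; each statement's English description precedes it below -/
import Mathlib

section
/- Let h : S¹ → S¹ be a homeomorphism and suppose there exist constants L > 0, δ > 0, m₁ > 1, M₁ ≥ m₁, M₂ > 1 such that: for every interval [a,b] of length < L there exist r ∈ ℕ and maps such that an expansion F₁ (a composition of r maps each expanding lengths by a factor in [m₁, M₁]) takes [a,b] to an interval of length in [L, L·M₁], while the corresponding composition F₂ of r maps each expanding lengths by a factor at most M₂ takes h⁻¹([a,b]) to an interval of length ≥ δ. Then h⁻¹ is α-Hölder continuous for α = ln m₁ / (ln m₁ + ln(M₂/m₁)) (up to a multiplicative constant). -/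
/-!
Since `M₂ ^ logb M₂ m₁ = m₁`, raising `δ ≤ (k b - k a) · M₂ ^ r` to the power `α = logb M₂ m₁`
turns the factor `M₂ ^ r` into `m₁ ^ r`, which is at most `L · M₁ / (b - a)`. Hence
`(b - a) · δ ^ α ≤ L · M₁ · (k b - k a) ^ α`, and `α` is the exponent of the statement because
`log m₁ + log (M₂ / m₁) = log M₂`.
-/

open Real

lemma rpow_rpow_logb_swap {M m : ℝ} (r : ℝ) (hM : 0 < M) (hM₁ : M ≠ 1) (hm : 0 < m) :
    (M ^ r) ^ logb M m = m ^ r := by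
  rw [← rpow_mul hM.le, mul_comm, rpow_mul hM.le, rpow_logb hM hM₁ hm]

lemma mul_rpow_logb_le_of_expansion {x y δ m M K r : ℝ} (hm : 1 ≤ m) (hM : 1 < M)
    (hδ : 0 < δ) (hx : 0 ≤ x) (hxK : x * m ^ r ≤ K) (hy : δ ≤ y * M ^ r) :
    x * δ ^ logb M m ≤ K * y ^ logb M m := by
  have hM₀ : 0 < M := one_pos.trans hM
  have hα : 0 ≤ logb M m := logb_nonneg hM hm
  have hy₀ : 0 ≤ y :=
    ((pos_iff_pos_of_mul_pos (hδ.trans_le hy)).2 (rpow_pos_of_pos hM₀ r)).le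
  calc x * δ ^ logb M m
      ≤ x * (y * M ^ r) ^ logb M m := by gcongr
    _ = y ^ logb M m * (x * m ^ r) := by
        rw [mul_rpow hy₀ (rpow_nonneg hM₀.le r),
          rpow_rpow_logb_swap r hM₀ hM.ne' (one_pos.trans_le hm)]
        ring
    _ ≤ y ^ logb M m * K := by gcongr
    _ = K * y ^ logb M m := mul_comm _ _

theorem holder_continuity_of_conjugacy_from_expansion_general
    (L δ m₁ M₁ M₂ : ℝ) (hL : 0 < L) (hδ : 0 < δ)
    (hm₁ : 1 < m₁) (hM₁ : m₁ ≤ M₁) (hM₂ : 1 < M₂)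
    (k : ℝ → ℝ)
    (hexp : ∀ a b : ℝ, a < b → b - a < L → ∃ r : ℝ, 0 ≤ r ∧
      L ≤ (b - a) * m₁ ^ r ∧ (b - a) * m₁ ^ r ≤ L * M₁ ∧ δ ≤ (k b - k a) * M₂ ^ r) :
    ∃ C > 0, ∀ a b : ℝ, a < b → b - a < L →
      b - a ≤ C * (k b - k a) ^ (Real.log m₁ / (Real.log m₁ + Real.log (M₂ / m₁))) := by
  have hexponent : log m₁ / (log m₁ + log (M₂ / m₁)) = logb M₂ m₁ := by
    rw [log_div (one_pos.trans hM₂).ne' (one_pos.trans hm₁).ne', add_sub_cancel, logb]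
  have hM₁₀ : 0 < M₁ := one_pos.trans (hm₁.trans_le hM₁)
  rw [hexponent]
  refine ⟨L * M₁ / δ ^ logb M₂ m₁, by positivity, fun a b hab hlt => ?_⟩
  obtain ⟨r, -, -, hr, hδr⟩ := hexp a b hab hlt
  rw [div_mul_eq_mul_div, le_div_iff₀ (by positivity)]
  exact mul_rpow_logb_le_of_expansion hm₁.le hM₂ hδ (sub_nonneg.2 hab.le) hr hδr

/-- Hölder continuity from expansion: let `k = h⁻¹` be the inverse of a circle homeomorphism
(modelled as an increasing map of `ℝ`).  Assume there are constants `L > 0`, `δ > 0`,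
`1 < m₁ ≤ M₁`, `1 < M₂` such that for every interval `[a,b]` of length `< L` there is `r ≥ 0`
with: the expansion by compositions of maps expanding lengths by factors in `[m₁, M₁]` takes
`[a,b]` to length in `[L, L·M₁]` (i.e. `L ≤ (b-a)·m₁^r` and `(b-a)·m₁^r ≤ L·M₁`), while the
corresponding composition expands `[k a, k b]` by a factor at most `M₂^r` to length `≥ δ`
(i.e. `δ ≤ (k b - k a)·M₂^r`).  Then, up to a multiplicative constant, for
`α = ln m₁ / (ln m₁ + ln(M₂/m₁))` one has `b - a ≤ C·(k b - k a)^α`, i.e. the conjugating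
homeomorphism is `α`-Hölder continuous. -/
theorem holder_continuity_of_conjugacy_from_expansion
    (L δ m₁ M₁ M₂ : ℝ) (hL : 0 < L) (hδ : 0 < δ)
    (hm₁ : 1 < m₁) (hM₁ : m₁ ≤ M₁) (hM₂ : 1 < M₂)
    (k : ℝ → ℝ) (hk : StrictMono k)
    (hexp : ∀ a b : ℝ, a < b → b - a < L → ∃ r : ℝ, 0 ≤ r ∧
      L ≤ (b - a) * m₁ ^ r ∧ (b - a) * m₁ ^ r ≤ L * M₁ ∧ δ ≤ (k b - k a) * M₂ ^ r) :
    ∃ C > 0, ∀ a b : ℝ, a < b → b - a < L →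
      b - a ≤ C * (k b - k a) ^ (Real.log m₁ / (Real.log m₁ + Real.log (M₂ / m₁))) :=
  holder_continuity_of_conjugacy_from_expansion_general L δ m₁ M₁ M₂ hL hδ hm₁ hM₁ hM₂ k hexp
end

section
/- From the two inequalities |b−a|·m^r ≤ K₁ and |d−c|·M^r ≥ δ with 1 < m ≤ M, K₁ > 0, δ > 0, r ≥ 0 real, one deduces |b−a| ≤ (K₁/δ)·(M/m)^{(ln K₁ − ln|b−a|)/ln m}·|d−c|, and consequently |b−a| ≤ C·|d−c|^α where α = 1/(1 + ln(M/m)/ln m) and C depends only on K₁, δ, m, M. -/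
/-!
Write `α = logb M m`, which is the exponent `1 / (1 + log (M / m) / log m)`. The first
inequality gives `x ≤ K₁ / m ^ r` and the second `δ / M ^ r ≤ y`; dividing them,
`x ≤ (K₁ / δ) (M / m) ^ r y`, and `x m ^ r ≤ K₁` bounds the unknown expansion time `r` by
`logb m (K₁ / x)`, which gives the linear bound. Raising the second inequality to the power `α`
instead turns `M ^ r` into `(M ^ r) ^ α = m ^ r`, so `r` cancels against the first inequality
and leaves `x δ ^ α ≤ K₁ y ^ α`.
-/

open Real

lemma one_div_one_add_log_div_log_eq_logb {m M : ℝ} (hm : m ≠ 0) (hM : M ≠ 0)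
    (hlm : log m ≠ 0) : 1 / (1 + log (M / m) / log m) = logb M m := by
  rw [log_div hM hm, logb]
  field_simp
  ring

lemma rpow_rpow_logb {b x : ℝ} (hb : 0 < b) (hb₁ : b ≠ 1) (hx : 0 < x) (r : ℝ) :
    (b ^ r) ^ logb b x = x ^ r := by
  rw [← rpow_mul hb.le, mul_comm, rpow_mul hb.le, rpow_logb hb hb₁ hx]

lemma le_logb_div_of_mul_rpow_le {m K x r : ℝ} (hm : 1 < m) (hx : 0 < x)
    (h : x * m ^ r ≤ K) : r ≤ logb m (K / x) := by
  have hK : 0 < K := (mul_pos hx (rpow_pos_of_pos (by linarith) r)).trans_le h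
  rw [le_logb_iff_rpow_le hm (div_pos hK hx), le_div_iff₀ hx, mul_comm]
  exact h

lemma le_div_mul_div_rpow_mul_of_mul_rpow_le {m M K δ x y r : ℝ} (hm : 0 < m) (hM : 0 < M)
    (hK : 0 ≤ K) (hδ : 0 < δ) (hx : x * m ^ r ≤ K) (hy : δ ≤ y * M ^ r) :
    x ≤ K / δ * (M / m) ^ r * y := by
  have hmr : 0 < m ^ r := rpow_pos_of_pos hm r
  calc x ≤ K / m ^ r := (le_div_iff₀ hmr).2 hx
    _ = K / δ * (M / m) ^ r * (δ / M ^ r) := by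
      rw [div_rpow hM.le hm.le]
      field_simp
    _ ≤ K / δ * (M / m) ^ r * y := by
      gcongr
      exact (div_le_iff₀ (rpow_pos_of_pos hM r)).2 hy

lemma le_div_rpow_logb_mul_rpow_logb_of_mul_rpow_le {m M K δ x y r : ℝ} (hm : 1 ≤ m)
    (hM : 1 < M) (hδ : 0 < δ) (hx₀ : 0 ≤ x) (hx : x * m ^ r ≤ K) (hy : δ ≤ y * M ^ r) :
    x ≤ K / δ ^ logb M m * y ^ logb M m := by
  have hMr : 0 < M ^ r := rpow_pos_of_pos (by linarith) r
  have hy₀ : 0 ≤ y := nonneg_of_mul_nonneg_left (hδ.le.trans hy) hMr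
  have hα : 0 ≤ logb M m := logb_nonneg hM hm
  have hδα : δ ^ logb M m ≤ y ^ logb M m * m ^ r := by
    calc δ ^ logb M m ≤ (y * M ^ r) ^ logb M m := rpow_le_rpow hδ.le hy hα
      _ = y ^ logb M m * m ^ r := by
        rw [mul_rpow hy₀ hMr.le, rpow_rpow_logb (by linarith) hM.ne' (by linarith)]
  rw [div_mul_eq_mul_div, le_div_iff₀ (rpow_pos_of_pos hδ _)]
  calc x * δ ^ logb M m ≤ x * (y ^ logb M m * m ^ r) := by gcongr
    _ = x * m ^ r * y ^ logb M m := by ring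
    _ ≤ K * y ^ logb M m := by gcongr

/-- From `|b−a|·m^r ≤ K₁` and `|d−c|·M^r ≥ δ` (with `1 < m ≤ M`, `K₁, δ > 0`, `r ≥ 0`) one
deduces `|b−a| ≤ (K₁/δ)·(M/m)^((ln K₁ − ln|b−a|)/ln m)·|d−c|`, and consequently
`|b−a| ≤ C·|d−c|^α` with `α = 1/(1 + ln(M/m)/ln m)` and `C` depending only on
`K₁, δ, m, M`.  Here `x` stands for `|b−a|` and `y` for `|d−c|`. -/
theorem holder_bound_from_expansion_inequalities
    (m M K₁ δ : ℝ) (hm : 1 < m) (hmM : m ≤ M) (hK₁ : 0 < K₁) (hδ : 0 < δ) :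
    ∃ C > 0, ∀ x y r : ℝ, 0 < x → 0 < y → x ≤ K₁ → 0 ≤ r →
      x * m ^ r ≤ K₁ → δ ≤ y * M ^ r →
      x ≤ K₁ / δ * (M / m) ^ ((Real.log K₁ - Real.log x) / Real.log m) * y ∧
      x ≤ C * y ^ (1 / (1 + Real.log (M / m) / Real.log m)) := by
  have hm₀ : 0 < m := by linarith
  have hM₀ : 0 < M := by linarith
  refine ⟨K₁ / δ ^ logb M m, by positivity, fun x y r hx hy _ _ hxm hyM => ⟨?_, ?_⟩⟩
  · have hr : r ≤ (log K₁ - log x) / log m := by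
      simpa only [logb, log_div hK₁.ne' hx.ne'] using le_logb_div_of_mul_rpow_le hm hx hxm
    calc x ≤ K₁ / δ * (M / m) ^ r * y :=
          le_div_mul_div_rpow_mul_of_mul_rpow_le hm₀ hM₀ hK₁.le hδ hxm hyM
      _ ≤ K₁ / δ * (M / m) ^ ((log K₁ - log x) / log m) * y := by
          gcongr
          exact (one_le_div hm₀).2 hmM
  · rw [one_div_one_add_log_div_log_eq_logb hm₀.ne' hM₀.ne' (log_pos hm).ne']
    exact le_div_rpow_logb_mul_rpow_logb_of_mul_rpow_le hm.le (hm.trans_le hmM) hδ hx.le hxm hyM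
end

section
/- Let f₁, f₂ be C² diffeomorphisms of an interval with ‖f_j − id‖_{C²} < ε for small ε, in particular 1−ε ≤ |f_j'| ≤ 1+ε. Then at every point where the commutator [f₁,f₂] = f₁∘f₂∘f₁⁻¹∘f₂⁻¹ is defined, |D²[f₁,f₂]| ≤ K(ε) · max{sup|D²f₁|, sup|D²f₂|} where K(ε) = 3·(1+ε)²/(1−ε)⁴ + (1+ε)²/(1−ε)⁵; in particular K(ε) ≤ 5 for ε small enough. -/
/-! Differentiating `f ∘ g = id` twice gives `g' = 1 / f'(g)` and `g'' = -f''(g) / f'(g)³`, so the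
inverses satisfy `|gⱼ'| ≤ 1/(1-ε)` and `|gⱼ''| ≤ B/(1-ε)³`. The chain rule
`(u ∘ v)'' = u''(v) v'² + u'(v) v''` propagates such first- and second-derivative bounds through the
four-fold composition; the bound obtained falls short of `K(ε) B` by exactly `B (1+ε) ε / (1-ε)⁴`. -/

section Identities

variable {𝕜 : Type*} [NontriviallyNormedField 𝕜] {u v f g : 𝕜 → 𝕜}

theorem deriv_comp_of_contDiff (hu : ContDiff 𝕜 2 u) (hv : ContDiff 𝕜 2 v) :
    deriv (u ∘ v) = fun x => deriv u (v x) * deriv v x :=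
  funext fun x => deriv_comp x (hu.differentiable two_ne_zero _) (hv.differentiable two_ne_zero _)

theorem deriv_deriv_comp (hu : ContDiff 𝕜 2 u) (hv : ContDiff 𝕜 2 v) (x : 𝕜) :
    deriv (deriv (u ∘ v)) x =
      deriv (deriv u) (v x) * deriv v x ^ 2 + deriv u (v x) * deriv (deriv v) x := by
  have hv₁ := hv.differentiable two_ne_zero x
  have hu₂ : DifferentiableAt 𝕜 (fun y => deriv u (v y)) x :=
    (hu.differentiable_deriv_two _).comp x hv₁
  have hchain : deriv (fun y => deriv u (v y)) x = deriv (deriv u) (v x) * deriv v x :=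
    deriv_comp x (hu.differentiable_deriv_two _) hv₁
  rw [deriv_comp_of_contDiff hu hv, deriv_fun_mul hu₂ (hv.differentiable_deriv_two x), hchain]
  ring

theorem deriv_mul_deriv_of_rightInverse (hf : ContDiff 𝕜 2 f) (hg : ContDiff 𝕜 2 g)
    (hfg : Function.RightInverse g f) (x : 𝕜) : deriv f (g x) * deriv g x = 1 := by
  rw [← congrFun (deriv_comp_of_contDiff hf hg) x, hfg.comp_eq_id, deriv_id]

theorem deriv_of_rightInverse (hf : ContDiff 𝕜 2 f) (hg : ContDiff 𝕜 2 g)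
    (hfg : Function.RightInverse g f) (x : 𝕜) : deriv g x = (deriv f (g x))⁻¹ :=
  (inv_eq_of_mul_eq_one_right (deriv_mul_deriv_of_rightInverse hf hg hfg x)).symm

theorem deriv_deriv_of_rightInverse (hf : ContDiff 𝕜 2 f) (hg : ContDiff 𝕜 2 g)
    (hfg : Function.RightInverse g f) (x : 𝕜) :
    deriv (deriv g) x = -deriv (deriv f) (g x) / deriv f (g x) ^ 3 := by
  have hid : deriv (deriv (f ∘ g)) x = 0 := by simp [hfg.comp_eq_id]
  have hne : deriv f (g x) ≠ 0 :=
    left_ne_zero_of_mul_eq_one (deriv_mul_deriv_of_rightInverse hf hg hfg x)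
  rw [deriv_deriv_comp hf hg, deriv_of_rightInverse hf hg hfg] at hid
  field_simp at hid ⊢
  linear_combination hid

end Identities

structure HasC2Bounds (f : ℝ → ℝ) (a b : ℝ) : Prop where
  contDiff : ContDiff ℝ 2 f
  abs_deriv_le : ∀ x, |deriv f x| ≤ a
  abs_deriv_deriv_le : ∀ x, |deriv (deriv f) x| ≤ b

namespace HasC2Bounds

variable {u v f g : ℝ → ℝ} {a₁ a₂ c₁ c₂ m b : ℝ}

theorem deriv_bound_nonneg (h : HasC2Bounds f a₁ a₂) : 0 ≤ a₁ :=
  (abs_nonneg _).trans (h.abs_deriv_le 0)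

theorem deriv_deriv_bound_nonneg (h : HasC2Bounds f a₁ a₂) : 0 ≤ a₂ :=
  (abs_nonneg _).trans (h.abs_deriv_deriv_le 0)

theorem comp (hu : HasC2Bounds u a₁ a₂) (hv : HasC2Bounds v c₁ c₂) :
    HasC2Bounds (u ∘ v) (a₁ * c₁) (a₂ * c₁ ^ 2 + a₁ * c₂) where
  contDiff := hu.contDiff.comp hv.contDiff
  abs_deriv_le x := by
    rw [deriv_comp_of_contDiff hu.contDiff hv.contDiff, abs_mul]
    exact mul_le_mul (hu.abs_deriv_le _) (hv.abs_deriv_le x) (abs_nonneg _) hu.deriv_bound_nonneg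
  abs_deriv_deriv_le x := by
    have ha₁ := hu.deriv_bound_nonneg
    have ha₂ := hu.deriv_deriv_bound_nonneg
    rw [deriv_deriv_comp hu.contDiff hv.contDiff]
    calc _ ≤ |deriv (deriv u) (v x)| * |deriv v x| ^ 2
          + |deriv u (v x)| * |deriv (deriv v) x| := by
          rw [← abs_pow, ← abs_mul, ← abs_mul]
          exact abs_add_le _ _
      _ ≤ a₂ * c₁ ^ 2 + a₁ * c₂ := by
          gcongr
          exacts [hu.abs_deriv_deriv_le _, hv.abs_deriv_le x, hu.abs_deriv_le _,
            hv.abs_deriv_deriv_le x]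

theorem of_rightInverse (hf : ContDiff ℝ 2 f) (hg : ContDiff ℝ 2 g)
    (hfg : Function.RightInverse g f) (hm : 0 < m) (hf₁ : ∀ x, m ≤ |deriv f x|)
    (hf₂ : ∀ x, |deriv (deriv f) x| ≤ b) : HasC2Bounds g m⁻¹ (b / m ^ 3) where
  contDiff := hg
  abs_deriv_le x := by
    rw [deriv_of_rightInverse hf hg hfg, abs_inv]
    exact inv_anti₀ hm (hf₁ _)
  abs_deriv_deriv_le x := by
    rw [deriv_deriv_of_rightInverse hf hg hfg, abs_div, abs_neg, abs_pow]
    exact div_le_div₀ ((abs_nonneg _).trans (hf₂ x)) (hf₂ _) (by positivity)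
      (pow_le_pow_left₀ hm.le (hf₁ _) 3)

end HasC2Bounds

noncomputable def commutatorConstant (ε : ℝ) : ℝ :=
  3 * (1 + ε) ^ 2 / (1 - ε) ^ 4 + (1 + ε) ^ 2 / (1 - ε) ^ 5

theorem commutatorConstant_le_five {ε : ℝ} (h0 : 0 ≤ ε) (h : ε ≤ 1 / 100) :
    commutatorConstant ε ≤ 5 := by
  have hc : 99 / 100 ≤ 1 - ε := by linarith
  calc commutatorConstant ε
      ≤ 3 * (101 / 100) ^ 2 / (99 / 100) ^ 4 + (101 / 100) ^ 2 / (99 / 100) ^ 5 := by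
        unfold commutatorConstant
        gcongr <;> linarith
    _ ≤ 5 := by norm_num

/-- Second-derivative bound for the commutator `[f₁,f₂] = f₁ ∘ f₂ ∘ f₁⁻¹ ∘ f₂⁻¹` of two C²
diffeomorphisms that are `ε`-close to the identity in the C² topology (so in particular
`1−ε ≤ |f_j'| ≤ 1+ε`): at every point,
`|D²[f₁,f₂]| ≤ K(ε)·max{sup |D²f₁|, sup |D²f₂|}` with
`K(ε) = 3·(1+ε)²/(1−ε)⁴ + (1+ε)²/(1−ε)⁵`; moreover `K(ε) ≤ 5` for `ε` small
(e.g. `ε ≤ 1/100`). -/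
theorem second_deriv_commutator_bound
    (ε : ℝ) (hε0 : 0 < ε) (hε1 : ε < 1)
    (f₁ f₂ g₁ g₂ : ℝ → ℝ)
    (hf₁ : ContDiff ℝ 2 f₁) (hf₂ : ContDiff ℝ 2 f₂)
    (hg₁ : ContDiff ℝ 2 g₁) (hg₂ : ContDiff ℝ 2 g₂)
    (hinv₁ : Function.LeftInverse g₁ f₁ ∧ Function.RightInverse g₁ f₁)
    (hinv₂ : Function.LeftInverse g₂ f₂ ∧ Function.RightInverse g₂ f₂)
    (hd₁ : ∀ x : ℝ, 1 - ε ≤ |deriv f₁ x| ∧ |deriv f₁ x| ≤ 1 + ε)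
    (hd₂ : ∀ x : ℝ, 1 - ε ≤ |deriv f₂ x| ∧ |deriv f₂ x| ≤ 1 + ε)
    (B : ℝ) (hB : 0 ≤ B)
    (hB₁ : ∀ x : ℝ, |deriv (deriv f₁) x| ≤ B)
    (hB₂ : ∀ x : ℝ, |deriv (deriv f₂) x| ≤ B) :
    (∀ x : ℝ, |deriv (deriv (f₁ ∘ f₂ ∘ g₁ ∘ g₂)) x| ≤
        (3 * (1 + ε) ^ 2 / (1 - ε) ^ 4 + (1 + ε) ^ 2 / (1 - ε) ^ 5) * B) ∧
      (ε ≤ 1 / 100 →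
        3 * (1 + ε) ^ 2 / (1 - ε) ^ 4 + (1 + ε) ^ 2 / (1 - ε) ^ 5 ≤ 5) := by
  have hc : 0 < 1 - ε := by linarith
  have F₁ : HasC2Bounds f₁ (1 + ε) B := ⟨hf₁, fun x => (hd₁ x).2, hB₁⟩
  have F₂ : HasC2Bounds f₂ (1 + ε) B := ⟨hf₂, fun x => (hd₂ x).2, hB₂⟩
  have G₁ := HasC2Bounds.of_rightInverse hf₁ hg₁ hinv₁.2 hc (fun x => (hd₁ x).1) hB₁
  have G₂ := HasC2Bounds.of_rightInverse hf₂ hg₂ hinv₂.2 hc (fun x => (hd₂ x).1) hB₂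
  refine ⟨fun x => ?_, commutatorConstant_le_five hε0.le⟩
  calc |deriv (deriv (f₁ ∘ f₂ ∘ g₁ ∘ g₂)) x|
      ≤ _ := (F₁.comp (F₂.comp (G₁.comp G₂))).abs_deriv_deriv_le x
    _ = commutatorConstant ε * B - B * (1 + ε) * ε / (1 - ε) ^ 4 := by
        unfold commutatorConstant
        field_simp
        ring
    _ ≤ commutatorConstant ε * B := sub_le_self _ (by positivity)
end

section
/- Let X be a compact metric space, Γ a group acting on X by homeomorphisms, and suppose there exist metrics d_w on X ∖ {a} indexed by points w (visual metrics from a basepoint) satisfying: (i) d_{γw}(γx, γy) = d_w(x,y) for all γ ∈ Γ, and (ii) (1/C)·e^{−εβ_a(w, w')}·d_w(x,y) ≤ d_{w'}(x,y) ≤ C·e^{−εβ_a(w, w')}·d_w(x,y) for a Busemann-type cocycle β_a. If γ_j ∈ Γ satisfy β_a(w, γ_j w) → −∞, then for every pair of distinct points x ≠ y in X ∖ {a}, d_w(x,y)/d_w(γ_j x, γ_j y) → ∞. Consequently γ_j cannot converge uniformly to the identity on any Cantor set K ⊆ X ∖ {a} containing at least two points (unless γ_j = id eventually). -/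
/-!
Equivariance gives `d (γ • w) (γ • x) (γ • y) = d w x y`, and comparing the basepoints `w` and
`γ • w` at the pair `(γ • x, γ • y)` then yields
`d w (γ • x) (γ • y) ≤ C e^{ε β(w, γ • w)} d w x y`: the images of two fixed points are crushed
together as `β(w, γ j • w) → -∞`. Uniform convergence to the identity on a set containing
`x ≠ y` would instead keep `d w (γ j • x) (γ j • y)` above `d w x y / 2`, by the triangle
inequality.
-/

open Filter

section

variable {X : Type*} {a : X}

lemma le_add_add_of_triangle {d : X → X → ℝ}
    (htri : ∀ x y z : X, x ≠ a → y ≠ a → z ≠ a → d x z ≤ d x y + d y z)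
    (hsymm : ∀ x y : X, d x y = d y x) {x y x' y' : X}
    (hx : x ≠ a) (hy : y ≠ a) (hx' : x' ≠ a) (hy' : y' ≠ a) :
    d x y ≤ d x x' + d x' y' + d y y' := by
  have h₁ := htri x x' y hx hx' hy
  have h₂ := htri x' y' y hx' hy' hy
  linarith [hsymm y' y]

lemma not_tendsto_div_atTop_of_eventually_close {ι : Type*} {l : Filter ι} [l.NeBot]
    {d : X → X → ℝ} {g : ι → X → X}
    (htri : ∀ x y z : X, x ≠ a → y ≠ a → z ≠ a → d x z ≤ d x y + d y z)
    (hsymm : ∀ x y : X, d x y = d y x) {x y : X} (hxy : 0 < d x y)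
    (hx : x ≠ a) (hy : y ≠ a) (hgx : ∀ j, g j x ≠ a) (hgy : ∀ j, g j y ≠ a)
    (hclose : ∀ᶠ j in l, d x (g j x) ≤ d x y / 4 ∧ d y (g j y) ≤ d x y / 4) :
    ¬ Tendsto (fun j => d x y / d (g j x) (g j y)) l atTop := by
  intro htend
  obtain ⟨j, ⟨hjx, hjy⟩, hj⟩ := (hclose.and (htend.eventually_gt_atTop 2)).exists
  have hhalf : d x y / 2 ≤ d (g j x) (g j y) := by
    linarith [le_add_add_of_triangle htri hsymm hx hy (hgx j) (hgy j)]
  have hpos : 0 < d (g j x) (g j y) := by linarith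
  rw [lt_div_iff₀ hpos] at hj
  linarith

end

lemma tendsto_const_mul_exp_neg_mul_atTop {ι : Type*} {l : Filter ι} {f : ι → ℝ} {c ε : ℝ}
    (hc : 0 < c) (hε : 0 < ε) (hf : Tendsto f l atBot) :
    Tendsto (fun j => c * Real.exp (-ε * f j)) l atTop := by
  refine (Real.tendsto_exp_atTop.comp ?_).const_mul_atTop hc
  simpa only [neg_mul, ← mul_neg, Function.comp_apply] using
    (tendsto_neg_atBot_atTop.comp hf).const_mul_atTop hε

section

variable {X Γ W : Type*} [Group Γ] [MulAction Γ X] [MulAction Γ W]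
  {a : X} {d : W → X → X → ℝ} {β : W → W → ℝ} {C ε : ℝ}

lemma inv_mul_exp_le_div_dist_smul
    (hequiv : ∀ (γ : Γ) (w : W) (x y : X), d (γ • w) (γ • x) (γ • y) = d w x y)
    (hcomp : ∀ (w w' : W) (x y : X), x ≠ a → y ≠ a →
      (1 / C) * Real.exp (-ε * β w w') * d w x y ≤ d w' x y)
    (hpos : ∀ (w : W) (x y : X), x ≠ y → x ≠ a → y ≠ a → 0 < d w x y)
    (w : W) (γ : Γ) {x y : X} (hxy : x ≠ y) (hγx : γ • x ≠ a) (hγy : γ • y ≠ a) :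
    (1 / C) * Real.exp (-ε * β w (γ • w)) ≤ d w x y / d w (γ • x) (γ • y) := by
  have hγxy : γ • x ≠ γ • y := (MulAction.injective γ).ne hxy
  rw [le_div_iff₀ (hpos w _ _ hγxy hγx hγy), ← hequiv γ w x y]
  exact hcomp w (γ • w) _ _ hγx hγy

lemma tendsto_div_dist_smul_atTop
    (hequiv : ∀ (γ : Γ) (w : W) (x y : X), d (γ • w) (γ • x) (γ • y) = d w x y)
    (hcomp : ∀ (w w' : W) (x y : X), x ≠ a → y ≠ a →
      (1 / C) * Real.exp (-ε * β w w') * d w x y ≤ d w' x y)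
    (hpos : ∀ (w : W) (x y : X), x ≠ y → x ≠ a → y ≠ a → 0 < d w x y)
    (hC : 0 < C) (hε : 0 < ε) {ι : Type*} {l : Filter ι} (w : W) {γ : ι → Γ}
    (hβ : Tendsto (fun j => β w (γ j • w)) l atBot)
    {x y : X} (hxy : x ≠ y) (hγ : ∀ j, γ j • x ≠ a ∧ γ j • y ≠ a) :
    Tendsto (fun j => d w x y / d w (γ j • x) (γ j • y)) l atTop :=
  tendsto_atTop_mono
    (fun j => inv_mul_exp_le_div_dist_smul hequiv hcomp hpos w (γ j) hxy (hγ j).1 (hγ j).2)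
    (tendsto_const_mul_exp_neg_mul_atTop (one_div_pos.2 hC) hε hβ)

end

theorem visual_metric_no_uniform_convergence_to_identity_general
    (X : Type*)
    (Γ : Type*) [Group Γ] [MulAction Γ X]
    (W : Type*) [MulAction Γ W]
    (a : X) (d : W → X → X → ℝ) (β : W → W → ℝ) (C ε : ℝ)
    (hC : 1 ≤ C) (hε : 0 < ε)
    (hequiv : ∀ (γ : Γ) (w : W) (x y : X), d (γ • w) (γ • x) (γ • y) = d w x y)
    (hcomp : ∀ (w w' : W) (x y : X), x ≠ a → y ≠ a →
      (1 / C) * Real.exp (-ε * β w w') * d w x y ≤ d w' x y ∧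
      d w' x y ≤ C * Real.exp (-ε * β w w') * d w x y)
    (hpos : ∀ (w : W) (x y : X), x ≠ y → x ≠ a → y ≠ a → 0 < d w x y)
    (hsymm : ∀ (w : W) (x y : X), d w x y = d w y x)
    (htri : ∀ (w : W) (x y z : X), x ≠ a → y ≠ a → z ≠ a →
      d w x z ≤ d w x y + d w y z)
    (w : W) (γ : ℕ → Γ)
    (hβ : Filter.Tendsto (fun j => β w (γ j • w)) Filter.atTop Filter.atBot) :
    (∀ x y : X, x ≠ y → x ≠ a → y ≠ a →
      (∀ j, γ j • x ≠ a ∧ γ j • y ≠ a) →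
      Filter.Tendsto (fun j => d w x y / d w (γ j • x) (γ j • y))
        Filter.atTop Filter.atTop) ∧
    ¬ ∃ K : Set X, a ∉ K ∧ (∀ x ∈ K, ∀ j, γ j • x ∈ K) ∧
        (∃ x ∈ K, ∃ y ∈ K, x ≠ y) ∧
        (∀ δ > 0, ∃ N : ℕ, ∀ j ≥ N, ∀ x ∈ K, d w x (γ j • x) ≤ δ) := by
  have hratio : ∀ x y : X, x ≠ y → (∀ j, γ j • x ≠ a ∧ γ j • y ≠ a) →
      Tendsto (fun j => d w x y / d w (γ j • x) (γ j • y)) atTop atTop :=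
    fun x y hxy hγ => tendsto_div_dist_smul_atTop hequiv
      (fun w w' x y hx hy => (hcomp w w' x y hx hy).1) hpos (by linarith) hε w hβ hxy hγ
  refine ⟨fun x y hxy _ _ => hratio x y hxy, ?_⟩
  rintro ⟨K, haK, hKinv, ⟨x, hx, y, hy, hxy⟩, hunif⟩
  have hne : ∀ z ∈ K, z ≠ a := fun z hz hza => haK (hza ▸ hz)
  have hD : 0 < d w x y := hpos w x y hxy (hne x hx) (hne y hy)
  obtain ⟨N, hN⟩ := hunif (d w x y / 4) (by positivity)
  refine not_tendsto_div_atTop_of_eventually_close (htri w) (hsymm w) hD (hne x hx) (hne y hy)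
    (fun j => hne _ (hKinv x hx j)) (fun j => hne _ (hKinv y hy j))
    (eventually_atTop.2 ⟨N, fun j hj => ⟨hN j hj x hx, hN j hj y hy⟩⟩)
    (hratio x y hxy fun j => ⟨hne _ (hKinv x hx j), hne _ (hKinv y hy j)⟩)

/-- Visual-metric rigidity on a boundary.  Let a group `Γ` act on a compact metric space `X`
and on a set `W` of basepoints, with metrics `d w` on `X ∖ {a}` satisfying the equivariance
`d (γ•w) (γ•x) (γ•y) = d w x y` and the conformal comparison
`(1/C)·e^{−ε·β w w'}·d w x y ≤ d w' x y ≤ C·e^{−ε·β w w'}·d w x y` for a Busemann-type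
cocycle `β`.  If `γ j ∈ Γ` satisfy `β w (γ j • w) → −∞`, then for every pair of distinct
points `x ≠ y` of `X ∖ {a}` (whose images avoid `a`), `d w x y / d w (γ j x) (γ j y) → ∞`;
consequently the `γ j` cannot converge uniformly (in `d w`) to the identity on any set
`K ⊆ X ∖ {a}` containing two distinct points. -/
theorem visual_metric_no_uniform_convergence_to_identity
    (X : Type*) [MetricSpace X] [CompactSpace X]
    (Γ : Type*) [Group Γ] [MulAction Γ X]
    (hhomeo : ∀ γ : Γ, Continuous fun x : X => γ • x)
    (W : Type*) [MulAction Γ W]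
    (a : X) (d : W → X → X → ℝ) (β : W → W → ℝ) (C ε : ℝ)
    (hC : 1 ≤ C) (hε : 0 < ε)
    (hequiv : ∀ (γ : Γ) (w : W) (x y : X), d (γ • w) (γ • x) (γ • y) = d w x y)
    (hcomp : ∀ (w w' : W) (x y : X), x ≠ a → y ≠ a →
      (1 / C) * Real.exp (-ε * β w w') * d w x y ≤ d w' x y ∧
      d w' x y ≤ C * Real.exp (-ε * β w w') * d w x y)
    (hpos : ∀ (w : W) (x y : X), x ≠ y → x ≠ a → y ≠ a → 0 < d w x y)
    (hsymm : ∀ (w : W) (x y : X), d w x y = d w y x)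
    (htri : ∀ (w : W) (x y z : X), x ≠ a → y ≠ a → z ≠ a →
      d w x z ≤ d w x y + d w y z)
    (w : W) (γ : ℕ → Γ)
    (hβ : Filter.Tendsto (fun j => β w (γ j • w)) Filter.atTop Filter.atBot) :
    (∀ x y : X, x ≠ y → x ≠ a → y ≠ a →
      (∀ j, γ j • x ≠ a ∧ γ j • y ≠ a) →
      Filter.Tendsto (fun j => d w x y / d w (γ j • x) (γ j • y))
        Filter.atTop Filter.atTop) ∧
    ¬ ∃ K : Set X, a ∉ K ∧ (∀ x ∈ K, ∀ j, γ j • x ∈ K) ∧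
        (∃ x ∈ K, ∃ y ∈ K, x ≠ y) ∧
        (∀ δ > 0, ∃ N : ℕ, ∀ j ≥ N, ∀ x ∈ K, d w x (γ j • x) ≤ δ) :=
  visual_metric_no_uniform_convergence_to_identity_general X Γ W a d β C ε hC hε hequiv hcomp hpos
    hsymm htri w γ hβ
end
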